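/- arXiv:math/0601674 — 4 statements merged into one kernel-verified Lean document; each statement's English description precedes it below -/
import Mathlib

section
/- Let K be a field of characteristic zero and K' an algebraically closed field extension of K. Let P and Q be ideals of the polynomial ring K[a₁,…,aₘ], with P prime and Q ⊄ P. Then the Zariski closure in K'^m of V(P') \ V(Q') equals V(P'), where P' and Q' denote the extensions of P and Q to K'[a₁,…,aₘ]. -/
/-!
Pick `g ∈ Q \ P`. A polynomial `f` vanishing on `V(P') \ V(Q')` makes `f · g` vanish on all of
`V(P')`, so `f · g` lies in the radical of `P'` by the Nullstellensatz. Since `K'[a]` is flat over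
`K[a]`, the element `g`, which is regular on the domain `K[a] ⧸ P`, stays regular on
`K'[a] ⧸ P' ≅ K'[a] ⊗ (K[a] ⧸ P)`; hence `f` itself lies in the radical of `P'`. So
`V(P') \ V(Q')` and `V(P')` have the same vanishing ideal, hence the same closure.
-/

open MvPolynomial

theorem Ideal.IsPrime.isSMulRegular_quotient {A : Type*} [CommRing A] {P : Ideal A}
    (hP : P.IsPrime) {g : A} (hg : g ∉ P) : IsSMulRegular (A ⧸ P) g := by
  rw [isSMulRegular_iff_right_eq_zero_of_smul]
  intro x hx
  obtain ⟨a, rfl⟩ := Ideal.Quotient.mk_surjective x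
  rw [Algebra.smul_def, Ideal.Quotient.algebraMap_eq, ← map_mul,
    Ideal.Quotient.eq_zero_iff_mem] at hx
  exact Ideal.Quotient.eq_zero_iff_mem.mpr ((hP.mem_or_mem hx).resolve_left hg)

section FlatBaseChange

variable {A B : Type*} [CommRing A] [CommRing B] [Algebra A B] [Module.Flat A B]

theorem Ideal.mem_map_of_mul_mem_map_of_flat {I : Ideal A} {g : A}
    (hg : IsSMulRegular (A ⧸ I) g) {f : B}
    (hf : f * algebraMap A B g ∈ I.map (algebraMap A B)) :
    f ∈ I.map (algebraMap A B) := by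
  have hreg : IsSMulRegular (B ⧸ I.map (algebraMap A B)) g :=
    (((Algebra.TensorProduct.quotIdealMapEquivTensorQuot B I).toLinearEquiv.restrictScalars
      A).isSMulRegular_congr g).mpr (hg.lTensor B)
  rw [← Ideal.Quotient.eq_zero_iff_mem] at hf ⊢
  refine hreg.right_eq_zero_of_smul ?_
  rw [Algebra.smul_def, IsScalarTower.algebraMap_apply A B, Ideal.Quotient.algebraMap_eq,
    ← map_mul, mul_comm, hf]

theorem Ideal.IsPrime.mem_radical_map_of_mul_mem {P : Ideal A} (hP : P.IsPrime) {g : A}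
    (hg : g ∉ P) {f : B} (hf : f * algebraMap A B g ∈ (P.map (algebraMap A B)).radical) :
    f ∈ (P.map (algebraMap A B)).radical := by
  obtain ⟨n, hn⟩ := hf
  rw [mul_pow, ← map_pow] at hn
  have hgn : g ^ n ∉ P := fun h => hg (hP.mem_of_pow_mem n h)
  exact ⟨n, Ideal.mem_map_of_mul_mem_map_of_flat (hP.isSMulRegular_quotient hgn) hn⟩

end FlatBaseChange

attribute [local instance] MvPolynomial.algebraMvPolynomial in
theorem MvPolynomial.flat_mvPolynomial {σ R S : Type*} [CommRing R] [CommRing S] [Algebra R S]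
    [Module.Flat R S] : Module.Flat (MvPolynomial σ R) (MvPolynomial σ S) :=
  Module.Flat.isBaseChange R (MvPolynomial σ R) S (MvPolynomial σ S) Algebra.IsPushout.out

theorem MvPolynomial.vanishingIdeal_zeroLocus_diff_eq_radical {σ k : Type*} [Field k]
    [IsAlgClosed k] [Finite σ] {J : Ideal (MvPolynomial σ k)} {h : MvPolynomial σ k}
    (hh : ∀ f, f * h ∈ J.radical → f ∈ J.radical) :
    vanishingIdeal k (zeroLocus k J \ {x | aeval x h = 0}) = J.radical := by
  refine le_antisymm (fun f hf => hh f ?_) ?_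
  · rw [← vanishingIdeal_zeroLocus_eq_radical (K := k), mem_vanishingIdeal_iff]
    intro x hx
    by_cases hhx : aeval x h = 0
    · rw [map_mul, hhx, mul_zero]
    · rw [map_mul, mem_vanishingIdeal_iff.mp hf x ⟨hx, hhx⟩, zero_mul]
  · rw [← vanishingIdeal_zeroLocus_eq_radical (K := k)]
    exact vanishingIdeal_anti_mono Set.sdiff_subset

theorem closure_diff_zeroLocus_extension_of_prime_general
    (m : ℕ) (K K' : Type*) [Field K] [Field K'] [Algebra K K']
    [IsAlgClosed K']
    (P Q : Ideal (MvPolynomial (Fin m) K)) (hP : P.IsPrime) (hQ : ¬ Q ≤ P) :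
    zeroLocus K' (vanishingIdeal K'
        (zeroLocus K' (P.map (MvPolynomial.map (algebraMap K K'))) \
         zeroLocus K' (Q.map (MvPolynomial.map (algebraMap K K'))))) =
      zeroLocus K' (P.map (MvPolynomial.map (algebraMap K K'))) := by
  set φ := MvPolynomial.map (σ := Fin m) (algebraMap K K')
  obtain ⟨g, hgQ, hgP⟩ := SetLike.not_le_iff_exists.mp hQ
  let := MvPolynomial.algebraMvPolynomial (σ := Fin m) (R := K) (S := K')
  have := MvPolynomial.flat_mvPolynomial (σ := Fin m) (R := K) (S := K')
  have hcolon : ∀ f, f * φ g ∈ (P.map φ).radical → f ∈ (P.map φ).radical := fun _ =>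
    hP.mem_radical_map_of_mul_mem hgP
  have hsub : zeroLocus K' (P.map φ) \ {x | aeval x (φ g) = 0} ⊆
      zeroLocus K' (P.map φ) \ zeroLocus K' (Q.map φ) :=
    Set.sdiff_subset_sdiff_right fun x hx =>
      mem_zeroLocus_iff.mp hx _ (Ideal.mem_map_of_mem φ hgQ)
  have hvan : vanishingIdeal K' (zeroLocus K' (P.map φ) \ zeroLocus K' (Q.map φ)) =
      vanishingIdeal K' (zeroLocus K' (P.map φ)) := by
    refine le_antisymm ?_ (vanishingIdeal_anti_mono Set.sdiff_subset)
    rw [vanishingIdeal_zeroLocus_eq_radical, ← vanishingIdeal_zeroLocus_diff_eq_radical hcolon]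
    exact vanishingIdeal_anti_mono hsub
  rw [hvan]
  exact zeroLocus_vanishingIdeal_galoisConnection.l_u_l_eq_l _

theorem closure_diff_zeroLocus_extension_of_prime
    (m : ℕ) (K K' : Type*) [Field K] [Field K'] [Algebra K K']
    [CharZero K] [IsAlgClosed K']
    (P Q : Ideal (MvPolynomial (Fin m) K)) (hP : P.IsPrime) (hQ : ¬ Q ≤ P) :
    zeroLocus K' (vanishingIdeal K'
        (zeroLocus K' (P.map (MvPolynomial.map (algebraMap K K'))) \
         zeroLocus K' (Q.map (MvPolynomial.map (algebraMap K K'))))) =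
      zeroLocus K' (P.map (MvPolynomial.map (algebraMap K K'))) :=
  closure_diff_zeroLocus_extension_of_prime_general m K K' P Q hP hQ
end

section
/- Let K be a field of characteristic zero and K' an algebraically closed field extension of K. Let N be a radical ideal of K[a₁,…,aₘ] and let h ∈ K[a₁,…,aₘ] be a polynomial such that h does not belong to any minimal prime of N over K[a₁,…,aₘ]. Then the Zariski closure in K'^m of V(N') \ V(h) equals V(N'), where N' denotes the extension of N to K'[a₁,…,aₘ] and V(h) is the zero locus in K'^m of h viewed in K'[a₁,…,aₘ]. -/
open MvPolynomial

/-!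
Since `h` lies in no minimal prime of `N`, it is a non-zero-divisor modulo `√N`. This survives
the base change `K[a] → K'[a]`: a polynomial over `K'` lies in the extended ideal as soon as every
`K`-linear functional `K' → K`, applied to its coefficients, sends it into the original ideal, and
these coefficientwise maps commute with multiplication by polynomials over `K`. Hence `p * h ∈ √N'`
forces `p ∈ √N'`. If `p` vanishes on `V(N') \ V(h)`, then `p * h` vanishes on `V(N')`, so lies in
`√N'` by the Nullstellensatz; thus `V(N') \ V(h)` and `V(N')` have the same vanishing ideal.
-/

lemma Ideal.mem_radical_of_mul_mem_radical {R : Type*} [CommRing R] {I : Ideal R} {g h : R}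
    (hh : ∀ P ∈ I.minimalPrimes, h ∉ P) (hgh : g * h ∈ I.radical) : g ∈ I.radical := by
  rw [← Ideal.sInf_minimalPrimes, Ideal.mem_sInf] at hgh ⊢
  exact fun P hP => (hP.1.1.mem_or_mem (hgh hP)).resolve_right (hh P hP)

namespace MvPolynomial

variable {σ K K' : Type*}

section CommRing

variable [CommRing K] [CommRing K'] [Algebra K K']

noncomputable def mapCoeffs (ℓ : K' →ₗ[K] K) : MvPolynomial σ K' →+ MvPolynomial σ K where
  toFun p := AddMonoidAlgebra.map (ℓ : K' →+ K) p
  map_zero' := AddMonoidAlgebra.map_zero _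
  map_add' := AddMonoidAlgebra.map_add _

@[simp]
lemma coeff_mapCoeffs (ℓ : K' →ₗ[K] K) (p : MvPolynomial σ K') (n : σ →₀ ℕ) :
    (mapCoeffs ℓ p).coeff n = ℓ (p.coeff n) :=
  rfl

lemma mapCoeffs_mul_map (ℓ : K' →ₗ[K] K) (p : MvPolynomial σ K') (g : MvPolynomial σ K) :
    mapCoeffs ℓ (p * map (algebraMap K K') g) = mapCoeffs ℓ p * g := by
  classical
  ext n
  rw [coeff_mapCoeffs, coeff_mul, coeff_mul, map_sum]
  refine Finset.sum_congr rfl fun x _ => ?_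
  rw [coeff_map, ← Algebra.commutes, ← Algebra.smul_def, map_smul, smul_eq_mul, mul_comm,
    coeff_mapCoeffs]

lemma mapCoeffs_mem_of_mem_map {N : Ideal (MvPolynomial σ K)} {f : MvPolynomial σ K'}
    (hf : f ∈ N.map (map (algebraMap K K'))) (ℓ : K' →ₗ[K] K) : mapCoeffs ℓ f ∈ N := by
  obtain ⟨n, c, g, rfl⟩ := Submodule.mem_span_set'.mp hf
  rw [map_sum]
  refine N.sum_mem fun i _ => ?_
  obtain ⟨q, hq, hgq⟩ := (g i).2
  rw [smul_eq_mul, ← hgq, mapCoeffs_mul_map]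
  exact N.mul_mem_left _ hq

end CommRing

section Field

variable [Field K] [CommRing K'] [Algebra K K']

lemma mem_map_of_forall_mapCoeffs_mem {N : Ideal (MvPolynomial σ K)} {f : MvPolynomial σ K'}
    (hf : ∀ ℓ : K' →ₗ[K] K, mapCoeffs ℓ f ∈ N) : f ∈ N.map (map (algebraMap K K')) := by
  classical
  let b := Module.Basis.ofVectorSpace K K'
  let S := f.support.biUnion fun n => (b.repr (f.coeff n)).support
  have hexpand : f = ∑ i ∈ S, C (b i) * map (algebraMap K K') (mapCoeffs (b.coord i) f) := by
    ext n
    simp only [coeff_sum, coeff_C_mul, coeff_map, coeff_mapCoeffs, Module.Basis.coord_apply,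
      mul_comm (b _), ← Algebra.smul_def]
    by_cases hn : n ∈ f.support
    · rw [← Finsupp.sum_of_support_subset (b.repr (f.coeff n))
        (Finset.subset_biUnion_of_mem (fun n => (b.repr (f.coeff n)).support) hn)
        (fun i (k : K) => k • b i) (fun i _ => zero_smul K (b i))]
      exact (b.linearCombination_repr (f.coeff n)).symm
    · simp [notMem_support_iff.mp hn]
  rw [hexpand]
  exact Ideal.sum_mem _ fun i _ => Ideal.mul_mem_left _ _ (Ideal.mem_map_of_mem _ (hf _))

lemma mem_map_of_mul_map_mem_map {N : Ideal (MvPolynomial σ K)} {h : MvPolynomial σ K}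
    (hreg : ∀ g, g * h ∈ N → g ∈ N) {f : MvPolynomial σ K'}
    (hf : f * map (algebraMap K K') h ∈ N.map (map (algebraMap K K'))) :
    f ∈ N.map (map (algebraMap K K')) :=
  mem_map_of_forall_mapCoeffs_mem fun ℓ =>
    hreg _ (mapCoeffs_mul_map ℓ f h ▸ mapCoeffs_mem_of_mem_map hf ℓ)

lemma mem_radical_map_of_mul_map_mem_radical_map {N : Ideal (MvPolynomial σ K)}
    {h : MvPolynomial σ K} (hh : ∀ P ∈ N.minimalPrimes, h ∉ P) {f : MvPolynomial σ K'}
    (hf : f * map (algebraMap K K') h ∈ (N.map (map (algebraMap K K'))).radical) :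
    f ∈ (N.map (map (algebraMap K K'))).radical := by
  obtain ⟨k, hk⟩ := hf
  have hhk : ∀ P ∈ N.minimalPrimes, h ^ k ∉ P := fun P hP hkP =>
    hh P hP (hP.1.1.mem_of_pow_mem k hkP)
  have hfk : f ^ k * map (algebraMap K K') (h ^ k) ∈ N.radical.map (map (algebraMap K K')) := by
    rw [map_pow, ← mul_pow]
    exact Ideal.map_mono N.le_radical hk
  have hfk' := Ideal.map_radical_le _ (mem_map_of_mul_map_mem_map
    (fun _ => Ideal.mem_radical_of_mul_mem_radical hhk) hfk)
  exact Ideal.radical_isRadical _ ⟨k, hfk'⟩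

end Field

lemma mul_mem_vanishingIdeal_of_mem_vanishingIdeal_diff {k K : Type*} [Field k] [Field K]
    [Algebra k K] {A : Set (σ → K)} {p q : MvPolynomial σ k}
    (hp : p ∈ vanishingIdeal k (A \ zeroLocus K (Ideal.span {q}))) :
    p * q ∈ vanishingIdeal k A := by
  intro x hx
  by_cases hq : aeval x q = 0
  · rw [map_mul, hq, mul_zero]
  · rw [map_mul, hp x ⟨hx, by simpa [zeroLocus_span] using hq⟩, zero_mul]

end MvPolynomial

theorem closure_diff_zeroLocus_redspec_general
    (m : ℕ) (K K' : Type*) [Field K] [Field K'] [Algebra K K']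
    [IsAlgClosed K']
    (N : Ideal (MvPolynomial (Fin m) K))
    (h : MvPolynomial (Fin m) K)
    (hh : ∀ P ∈ N.minimalPrimes, h ∉ P) :
    zeroLocus K' (vanishingIdeal K'
        (zeroLocus K' (N.map (MvPolynomial.map (algebraMap K K'))) \
         zeroLocus K' (Ideal.span {MvPolynomial.map (algebraMap K K') h}))) =
      zeroLocus K' (N.map (MvPolynomial.map (algebraMap K K'))) := by
  set N' := N.map (MvPolynomial.map (algebraMap K K'))
  have hI : vanishingIdeal K' (zeroLocus K' N' \
      zeroLocus K' (Ideal.span {MvPolynomial.map (algebraMap K K') h})) =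
      vanishingIdeal K' (zeroLocus K' N') := by
    refine le_antisymm (fun p hp => ?_) (vanishingIdeal_anti_mono Set.sdiff_subset)
    have hph := mul_mem_vanishingIdeal_of_mem_vanishingIdeal_diff hp
    rw [vanishingIdeal_zeroLocus_eq_radical] at hph ⊢
    exact mem_radical_map_of_mul_map_mem_radical_map hh hph
  rw [hI]
  exact zeroLocus_vanishingIdeal_galoisConnection.l_u_l_eq_l N'

theorem closure_diff_zeroLocus_redspec
    (m : ℕ) (K K' : Type*) [Field K] [Field K'] [Algebra K K']
    [CharZero K] [IsAlgClosed K']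
    (N : Ideal (MvPolynomial (Fin m) K)) (hN : N.radical = N)
    (h : MvPolynomial (Fin m) K)
    (hh : ∀ P ∈ N.minimalPrimes, h ∉ P) :
    zeroLocus K' (vanishingIdeal K'
        (zeroLocus K' (N.map (MvPolynomial.map (algebraMap K K'))) \
         zeroLocus K' (Ideal.span {MvPolynomial.map (algebraMap K K') h}))) =
      zeroLocus K' (N.map (MvPolynomial.map (algebraMap K K'))) :=
  closure_diff_zeroLocus_redspec_general m K K' N h hh
end

section
/- Let K be a field and K' an extension field of K. Let N and M be ideals of K[a₁,…,aₘ]. Then in K'^m one has the set identity V(N') \ V(M') = ⋃_{P ∈ minimalPrimes(N)} ( V(P') \ V((M + P)') ), where the union ranges over the minimal primes P of N in K[a₁,…,aₘ] and I' denotes the extension of an ideal I to K'[a₁,…,aₘ]. -/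
/-!
A point `x ∈ K'^m` lies in `V(I')` exactly when `I` is contained in the prime ideal
`Q_x = ker (aeval x)` of `K[a]`. Pointwise the identity therefore says that `N ≤ Q` and `M ≰ Q`
iff some minimal prime `P` of `N` has `P ≤ Q` and `M ⊔ P ≰ Q`, which holds because every prime
containing `N` contains a minimal prime of `N`.
-/

open MvPolynomial

theorem Ideal.exists_mem_minimalPrimes_le_and_not_sup_le_iff {R : Type*} [CommSemiring R]
    {N M Q : Ideal R} [Q.IsPrime] :
    (∃ P ∈ N.minimalPrimes, P ≤ Q ∧ ¬M ⊔ P ≤ Q) ↔ N ≤ Q ∧ ¬M ≤ Q := by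
  simp only [sup_le_iff]
  constructor
  · rintro ⟨P, hP, hPQ, hMP⟩
    exact ⟨hP.1.2.trans hPQ, fun hMQ => hMP ⟨hMQ, hPQ⟩⟩
  · rintro ⟨hNQ, hMQ⟩
    obtain ⟨P, hP, hPQ⟩ := Ideal.exists_minimalPrimes_le hNQ
    exact ⟨P, hP, hPQ, fun h => hMQ h.1⟩

theorem MvPolynomial.mem_zeroLocus_map_algebraMap_iff {σ K K' : Type*} [Field K] [Field K']
    [Algebra K K'] {I : Ideal (MvPolynomial σ K)} {x : σ → K'} :
    x ∈ zeroLocus K' (I.map (map (algebraMap K K'))) ↔ I ≤ RingHom.ker (aeval x) := by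
  have eval_comp_map :
      (eval x).comp (map (algebraMap K K')) = (aeval x : MvPolynomial σ K →ₐ[K] K') :=
    RingHom.ext fun p => eval_map _ x p
  change I.map _ ≤ RingHom.ker (eval x) ↔ _
  rw [Ideal.map_le_iff_le_comap, RingHom.comap_ker, eval_comp_map, RingHom.ker_coe_toRingHom]

theorem diff_zeroLocus_eq_iUnion_minimalPrimes
    (m : ℕ) (K K' : Type*) [Field K] [Field K'] [Algebra K K']
    (N M : Ideal (MvPolynomial (Fin m) K)) :
    zeroLocus K' (N.map (MvPolynomial.map (algebraMap K K'))) \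
        zeroLocus K' (M.map (MvPolynomial.map (algebraMap K K'))) =
      ⋃ P ∈ N.minimalPrimes,
        (zeroLocus K' (P.map (MvPolynomial.map (algebraMap K K'))) \
          zeroLocus K' ((M + P).map (MvPolynomial.map (algebraMap K K')))) := by
  ext x
  have : (RingHom.ker (aeval (R := K) x)).IsPrime := RingHom.ker_isPrime _
  simp only [Set.mem_sdiff, Set.mem_iUnion, mem_zeroLocus_map_algebraMap_iff, exists_prop,
    Submodule.add_eq_sup]
  exact Ideal.exists_mem_minimalPrimes_le_and_not_sup_le_iff.symm
end

section
/- Let K be a field of characteristic zero and K' an algebraically closed field extension of K. Let {N_i}_{i∈F} be a finite family of prime ideals of K[a₁,…,aₘ], and for each i let {M_{ij}}_{j∈G_i} be a finite family of prime ideals of K[a₁,…,aₘ] with N_i ⊊ M_{ij} for every j. Set C = ⋃_{i∈F} ( V(N_i') \ ⋃_{j∈G_i} V(M_{ij}') ) ⊆ K'^m. Then the Zariski closure of C in K'^m equals ⋃_{i∈F} V(N_i'). -/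
/-!
Each piece `V(N_i') \ ⋃_j V(M_ij')` is dense in `V(N_i')`: choosing `g ∈ ⋂_j M_ij \ N_i`, a
polynomial `f` vanishing on the piece has `f·g` vanishing on `V(N_i')`, so `f·g ∈ √(N_i')` by the
Nullstellensatz. Since `K'[a]` is flat over `K[a]` and `g` is regular on `K[a]/N_i`, it stays
regular on `K'[a]/(N_i')`, whence `f ∈ √(N_i')`. The finite union `⋃_i V(N_i')` is closed, so it is
the closure of `C`.
-/

open MvPolynomial

namespace Ideal

variable {A : Type*} [CommRing A]

theorem IsPrime.exists_notMem_forall_mem_of_lt {ι : Type*} [Finite ι] {P : Ideal A}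
    (hP : P.IsPrime) {M : ι → Ideal A} (hPM : ∀ j, P < M j) : ∃ g ∉ P, ∀ j, g ∈ M j := by
  have := Fintype.ofFinite ι
  choose g hgM hgP using fun j => SetLike.exists_of_lt (hPM j)
  refine ⟨∏ j, g j, fun hmem => ?_, fun j => prod_mem _ (Finset.mem_univ j) (hgM j)⟩
  obtain ⟨j, -, hj⟩ := (hP.prod_mem_iff (s := Finset.univ)).mp hmem
  exact hgP j hj

theorem IsPrime.isSMulRegular_quotient_s7 {P : Ideal A} (hP : P.IsPrime) {a : A} (ha : a ∉ P) :
    IsSMulRegular (A ⧸ P) a := fun _ _ hxy =>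
  mul_left_cancel₀ (by rwa [ne_eq, Quotient.eq_zero_iff_mem]) hxy

variable {B : Type*} [CommRing B] [Algebra A B] [Module.Flat A B]

theorem mem_map_of_algebraMap_mul_mem_map {I : Ideal A} {a : A} (ha : IsSMulRegular (A ⧸ I) a)
    {b : B} (h : algebraMap A B a * b ∈ I.map (algebraMap A B)) :
    b ∈ I.map (algebraMap A B) := by
  have hB : IsSMulRegular (B ⧸ I.map (algebraMap A B)) a :=
    ((Algebra.TensorProduct.quotIdealMapEquivTensorQuot B I).toLinearEquiv.restrictScalars A
      |>.isSMulRegular_congr a).mpr (ha.lTensor B)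
  rw [← Quotient.eq_zero_iff_mem] at h ⊢
  refine hB (?_ : a • Quotient.mk _ b = a • 0)
  rwa [smul_zero, Algebra.smul_def, ← Quotient.mk_algebraMap, ← map_mul]

theorem IsPrime.mem_radical_map_of_algebraMap_mul_mem {P : Ideal A} (hP : P.IsPrime) {a : A}
    (ha : a ∉ P) {b : B} (h : algebraMap A B a * b ∈ (P.map (algebraMap A B)).radical) :
    b ∈ (P.map (algebraMap A B)).radical := by
  obtain ⟨n, hn⟩ := h
  rw [mul_pow, ← map_pow] at hn
  exact ⟨n, mem_map_of_algebraMap_mul_mem_map ((hP.isSMulRegular_quotient_s7 ha).pow n) hn⟩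

end Ideal

namespace MvPolynomial

section FlatBaseChange

attribute [local instance] algebraMvPolynomial

variable {σ R S : Type*} [CommRing R] [CommRing S] [Algebra R S] [Module.Flat R S]

instance flat_of_flat : Module.Flat (MvPolynomial σ R) (MvPolynomial σ S) :=
  Module.Flat.isBaseChange R (MvPolynomial σ R) S (MvPolynomial σ S) Algebra.IsPushout.out

theorem mem_radical_map_of_map_mul_mem {P : Ideal (MvPolynomial σ R)} (hP : P.IsPrime)
    {g : MvPolynomial σ R} (hg : g ∉ P) {f : MvPolynomial σ S}
    (h : map (algebraMap R S) g * f ∈ (P.map (map (algebraMap R S))).radical) :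
    f ∈ (P.map (map (algebraMap R S))).radical :=
  hP.mem_radical_map_of_algebraMap_mul_mem hg h

end FlatBaseChange

variable {σ k K : Type*} [Field k] [Field K] [Algebra k K]

theorem zeroLocus_radical (I : Ideal (MvPolynomial σ k)) :
    zeroLocus K I.radical = zeroLocus K I :=
  le_antisymm (zeroLocus_anti_mono I.le_radical)
    (le_zeroLocus_iff_le_vanishingIdeal.mpr (radical_le_vanishingIdeal_zeroLocus I))

theorem zeroLocus_iInf {ι : Type*} [Finite ι] (J : ι → Ideal (MvPolynomial σ k)) :
    zeroLocus K (⨅ i, J i) = ⋃ i, zeroLocus K (J i) := by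
  refine le_antisymm (fun x hx => ?_)
    (Set.iUnion_subset fun i => zeroLocus_anti_mono (iInf_le J i))
  by_contra hxJ
  simp only [Set.mem_iUnion, mem_zeroLocus_iff, not_exists, not_forall] at hxJ
  have := Fintype.ofFinite ι
  choose p hpJ hpx using hxJ
  have hprod : ∏ i, p i ∈ ⨅ i, J i :=
    Submodule.mem_iInf _ |>.mpr fun i => Ideal.prod_mem _ (Finset.mem_univ i) (hpJ i)
  exact Finset.prod_ne_zero_iff.mpr (fun i _ => hpx i) (by rw [← map_prod]; exact hx _ hprod)

theorem zeroLocus_vanishingIdeal_iUnion_zeroLocus {ι : Type*} [Finite ι]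
    (J : ι → Ideal (MvPolynomial σ k)) :
    zeroLocus K (vanishingIdeal k (⋃ i, zeroLocus K (J i))) = ⋃ i, zeroLocus K (J i) := by
  rw [← zeroLocus_iInf, zeroLocus_vanishingIdeal_galoisConnection.l_u_l_eq_l]

theorem vanishingIdeal_zeroLocus_diff_le_radical [IsAlgClosed K] [Finite σ]
    (J : Ideal (MvPolynomial σ k)) {h : MvPolynomial σ k}
    (hJh : ∀ f, h * f ∈ J.radical → f ∈ J.radical) {Z : Set (σ → K)}
    (hZ : h ∈ vanishingIdeal k Z) :
    vanishingIdeal k (zeroLocus K J \ Z) ≤ J.radical := by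
  refine fun f hf => hJh f ?_
  rw [← vanishingIdeal_zeroLocus_eq_radical (K := K)]
  intro x hx
  by_cases hxZ : x ∈ Z
  · rw [map_mul, hZ x hxZ, zero_mul]
  · rw [map_mul, hf x ⟨hx, hxZ⟩, mul_zero]

end MvPolynomial

theorem closure_canSpecification_eq_iUnion_zeroLocus_general
    (m : ℕ) (K K' : Type*) [Field K] [Field K'] [Algebra K K']
    [IsAlgClosed K']
    (ι : Type*) [Finite ι] (N : ι → Ideal (MvPolynomial (Fin m) K))
    (hN : ∀ i, (N i).IsPrime)
    (κ : ι → Type*) [∀ i, Finite (κ i)]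
    (M : (i : ι) → κ i → Ideal (MvPolynomial (Fin m) K))
    (hNM : ∀ i j, N i < M i j) :
    zeroLocus K' (vanishingIdeal K'
        (⋃ i, (zeroLocus K' ((N i).map (MvPolynomial.map (algebraMap K K'))) \
          ⋃ j, zeroLocus K' ((M i j).map (MvPolynomial.map (algebraMap K K')))))) =
      ⋃ i, zeroLocus K' ((N i).map (MvPolynomial.map (algebraMap K K'))) := by
  set φ := MvPolynomial.map (algebraMap K K')
  refine le_antisymm ?_ (Set.iUnion_subset fun i => ?_)
  · rw [← zeroLocus_vanishingIdeal_iUnion_zeroLocus (k := K')]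
    exact zeroLocus_anti_mono (vanishingIdeal_anti_mono (Set.iUnion_mono fun _ => Set.sdiff_subset))
  obtain ⟨g, hgN, hgM⟩ := (hN i).exists_notMem_forall_mem_of_lt (hNM i)
  have hgZ : φ g ∈ vanishingIdeal K' (⋃ j, zeroLocus K' ((M i j).map φ)) := by
    rintro x ⟨_, ⟨j, rfl⟩, hx⟩
    exact hx _ (Ideal.mem_map_of_mem φ (hgM j))
  have hpiece := vanishingIdeal_zeroLocus_diff_le_radical _
    (fun _ => mem_radical_map_of_map_mul_mem (hN i) hgN) hgZ
  calc zeroLocus K' ((N i).map φ)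
      = zeroLocus K' ((N i).map φ).radical := (zeroLocus_radical _).symm
    _ ≤ _ := zeroLocus_anti_mono hpiece
    _ ≤ _ := zeroLocus_anti_mono (vanishingIdeal_anti_mono (Set.subset_iUnion_of_subset i le_rfl))

theorem closure_canSpecification_eq_iUnion_zeroLocus
    (m : ℕ) (K K' : Type*) [Field K] [Field K'] [Algebra K K']
    [CharZero K] [IsAlgClosed K']
    (ι : Type*) [Finite ι] (N : ι → Ideal (MvPolynomial (Fin m) K))
    (hN : ∀ i, (N i).IsPrime)
    (κ : ι → Type*) [∀ i, Finite (κ i)]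
    (M : (i : ι) → κ i → Ideal (MvPolynomial (Fin m) K))
    (hM : ∀ i j, (M i j).IsPrime)
    (hNM : ∀ i j, N i < M i j) :
    zeroLocus K' (vanishingIdeal K'
        (⋃ i, (zeroLocus K' ((N i).map (MvPolynomial.map (algebraMap K K'))) \
          ⋃ j, zeroLocus K' ((M i j).map (MvPolynomial.map (algebraMap K K')))))) =
      ⋃ i, zeroLocus K' ((N i).map (MvPolynomial.map (algebraMap K K'))) :=
  closure_canSpecification_eq_iUnion_zeroLocus_general m K K' ι N hN κ M hNM
end
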